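/- Let d ≥ 1, let ρ be a probability measure on ℝ^d, let F be a countable family of open axis-parallel cubes in ℝ^d, let B ≥ 1, and let D > 0 satisfy the doubling condition ρ(5B√d · Q) ≤ D · ρ(Q) for every Q ∈ F, where r·Q denotes the cube with the same center as Q and sidelength multiplied by r. Then for every family (a_Q)_{Q∈F} of nonnegative real numbers, ‖Σ_{Q∈F} a_Q · χ_{B·Q}‖_{L²(ρ)} ≤ (2D)^{3/2} · ‖Σ_{Q∈F} a_Q · χ_Q‖_{L²(ρ)}, where χ_S denotes the characteristic function of the set S. -/

import Mathlib

open MeasureTheory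
open scoped NNReal ENNReal

noncomputable section

/-- The open axis-parallel cube with center `z` and sidelength `l`. -/
def cube {d : ℕ} (z : EuclideanSpace ℝ (Fin d)) (l : ℝ) : Set (EuclideanSpace ℝ (Fin d)) :=
  {x | ∀ i, |x i - z i| < l / 2}

/-!
For finitely many cubes, put `G = ∑ a_Q χ_{BQ}`, `F = ∑ a_Q χ_Q` and let `M` be the maximal
operator of averages over the cubes `BQ`. Since `ρ(BQ) ≤ D ρ(Q)` and the average of `G` over `BQ`
is at most `MG` on `Q`, we get `∫ G² = ∑ a_Q ∫_{BQ} G ≤ D ∫ F · MG ≤ D ‖F‖₂ ‖MG‖₂`.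
The `5r`-covering lemma gives the weak type bound `t ρ{MG > t} ≤ D ∫ G`, and splitting `G` at
height `t / 2` upgrades it to `‖MG‖₂² ≤ 8D ‖G‖₂²`. As `‖G‖₂ < ∞`, it can be cancelled from
`‖G‖₂² ≤ D √(8D) ‖F‖₂ ‖G‖₂`; monotone convergence then passes to countable families.
-/

open Set Filter

theorem le_ofReal_mul_of_toReal_le {a b : ℝ≥0∞} {c : ℝ} (ha : a ≠ ∞) (hb : b ≠ ∞) (hc : 0 ≤ c)
    (h : a.toReal ≤ c * b.toReal) : a ≤ ENNReal.ofReal c * b := by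
  rw [← ENNReal.ofReal_toReal hb, ← ENNReal.ofReal_mul hc]
  exact (ENNReal.le_ofReal_iff_toReal_le ha (by positivity)).2 h

section Lintegral

variable {α : Type*} [MeasurableSpace α] {μ : Measure α}

theorem lintegral_rpow_eq_lintegral_meas_ofReal_lt_mul {g : α → ℝ≥0∞} (hg : AEMeasurable g μ)
    (hg_top : ∀ x, g x ≠ ∞) {p : ℝ} (hp : 0 < p) :
    ∫⁻ x, g x ^ p ∂μ = ENNReal.ofReal p *
      ∫⁻ t in Ioi 0, μ {x | ENNReal.ofReal t < g x} * ENNReal.ofReal (t ^ (p - 1)) := by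
  have h := lintegral_rpow_eq_lintegral_meas_lt_mul μ
    (Eventually.of_forall fun x => ENNReal.toReal_nonneg) hg.ennreal_toReal hp
  simp only [← ENNReal.ofReal_rpow_of_nonneg ENNReal.toReal_nonneg hp.le,
    ENNReal.ofReal_toReal (hg_top _)] at h
  rw [h]
  congr 1
  refine setLIntegral_congr_fun measurableSet_Ioi fun t ht => ?_
  simp_rw [ENNReal.ofReal_lt_iff_lt_toReal (le_of_lt ht) (hg_top _)]

theorem lintegral_sq_eq_lintegral_meas_ofReal_lt_mul {g : α → ℝ≥0∞} (hg : AEMeasurable g μ)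
    (hg_top : ∀ x, g x ≠ ∞) :
    ∫⁻ x, g x ^ 2 ∂μ = 2 * ∫⁻ t in Ioi 0, μ {x | ENNReal.ofReal t < g x} * ENNReal.ofReal t := by
  simpa [show (2 : ℝ) - 1 = 1 by norm_num] using
    lintegral_rpow_eq_lintegral_meas_ofReal_lt_mul hg hg_top two_pos

theorem lintegral_eq_lintegral_meas_ofReal_lt {g : α → ℝ≥0∞} (hg : AEMeasurable g μ)
    (hg_top : ∀ x, g x ≠ ∞) :
    ∫⁻ x, g x ∂μ = ∫⁻ t in Ioi 0, μ {x | ENNReal.ofReal t < g x} := by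
  simpa using lintegral_rpow_eq_lintegral_meas_ofReal_lt_mul hg hg_top one_pos

theorem sq_lintegral_mul_le {f g : α → ℝ≥0∞} (hf : AEMeasurable f μ) (hg : AEMeasurable g μ) :
    (∫⁻ x, f x * g x ∂μ) ^ 2 ≤ (∫⁻ x, f x ^ 2 ∂μ) * ∫⁻ x, g x ^ 2 ∂μ := by
  have h := ENNReal.lintegral_mul_le_Lp_mul_Lq μ Real.HolderConjugate.two_two hf hg
  simp only [Pi.mul_apply, ENNReal.rpow_two] at h
  calc (∫⁻ x, f x * g x ∂μ) ^ 2
      ≤ ((∫⁻ x, f x ^ 2 ∂μ) ^ (1 / 2 : ℝ) * (∫⁻ x, g x ^ 2 ∂μ) ^ (1 / 2 : ℝ)) ^ 2 := by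
        gcongr
    _ = (∫⁻ x, f x ^ 2 ∂μ) * ∫⁻ x, g x ^ 2 ∂μ := by
      rw [mul_pow, ← ENNReal.rpow_mul_natCast, ← ENNReal.rpow_mul_natCast]
      norm_num

theorem lintegral_sum_indicator_mul {ι : Type*} {S : ι → Set α} (hS : ∀ i, MeasurableSet (S i))
    {h : α → ℝ≥0∞} (hh : Measurable h) (A : ι → ℝ≥0∞) (s : Finset ι) :
    ∫⁻ x, (∑ i ∈ s, A i * (S i).indicator (fun _ => 1) x) * h x ∂μ =
      ∑ i ∈ s, A i * ∫⁻ x in S i, h x ∂μ := by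
  have hterm : ∀ i x, A i * (S i).indicator (fun _ => 1) x * h x = A i * (S i).indicator h x :=
    fun i x => by by_cases hx : x ∈ S i <;> simp [hx]
  simp_rw [Finset.sum_mul, hterm]
  rw [lintegral_finsetSum _ fun i _ => (hh.indicator (hS i)).const_mul _]
  refine Finset.sum_congr rfl fun i _ => ?_
  rw [lintegral_const_mul _ (hh.indicator (hS i)), lintegral_indicator (hS i)]

theorem lintegral_sq_tsum_le_of_forall_finset {ι : Type*} [Countable ι] {f g : ι → α → ℝ≥0∞}
    (hf : ∀ i, Measurable (f i)) {C : ℝ≥0∞}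
    (h : ∀ s : Finset ι,
      ∫⁻ x, (∑ i ∈ s, f i x) ^ 2 ∂μ ≤ C * ∫⁻ x, (∑ i ∈ s, g i x) ^ 2 ∂μ) :
    ∫⁻ x, (∑' i, f i x) ^ 2 ∂μ ≤ C * ∫⁻ x, (∑' i, g i x) ^ 2 ∂μ := by
  have hmono : Monotone fun (s : Finset ι) x => (∑ i ∈ s, f i x) ^ 2 :=
    fun s t hst x => pow_le_pow_left' (Finset.sum_le_sum_of_subset hst) 2
  have hmeas : ∀ s : Finset ι, AEMeasurable (fun x => (∑ i ∈ s, f i x) ^ 2) μ :=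
    fun s => ((s.measurable_sum fun i _ => hf i).pow_const 2).aemeasurable
  simp_rw [ENNReal.tsum_eq_iSup_sum, ENNReal.iSup_pow]
  rw [lintegral_iSup_directed hmeas hmono.directed_le]
  refine iSup_le fun s => (h s).trans ?_
  gcongr with x
  exact le_iSup (fun t : Finset ι => (∑ i ∈ t, g i x) ^ 2) s

end Lintegral

section MaximalOperator

variable {α ι : Type*}

def IsVitaliEnlargement (S E : ι → Set α) : Prop :=
  ∀ T : Finset ι, ∃ U ⊆ T, (U : Set ι).PairwiseDisjoint S ∧ ∀ i ∈ T, ∃ j ∈ U, S i ⊆ E j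

theorem IsVitaliEnlargement.mono {S E E' : ι → Set α} (h : IsVitaliEnlargement S E)
    (hE : ∀ i, E i ⊆ E' i) : IsVitaliEnlargement S E' := fun T => by
  obtain ⟨U, hUT, hdisj, hcov⟩ := h T
  exact ⟨U, hUT, hdisj, fun i hi => (hcov i hi).imp fun j ⟨hj, hsub⟩ => ⟨hj, hsub.trans (hE j)⟩⟩

variable [MeasurableSpace α] {ρ : Measure α}

def maximalOp (ρ : Measure α) (S : ι → Set α) (s : Finset ι) (f : α → ℝ≥0∞) (x : α) : ℝ≥0∞ :=
  s.sup fun j => (S j).indicator (fun _ => ⨍⁻ y in S j, f y ∂ρ) x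

variable {S E : ι → Set α} {s : Finset ι} {f g : α → ℝ≥0∞}

theorem setLAverage_le_maximalOp {j : ι} (hj : j ∈ s) {x : α} (hx : x ∈ S j) :
    ⨍⁻ y in S j, f y ∂ρ ≤ maximalOp ρ S s f x := by
  have h := Finset.le_sup (f := fun j => (S j).indicator (fun _ => ⨍⁻ y in S j, f y ∂ρ) x) hj
  rwa [Set.indicator_of_mem hx] at h

theorem measurable_maximalOp (hS : ∀ j, MeasurableSet (S j)) :
    Measurable (maximalOp ρ S s f) := by
  unfold maximalOp
  simp only [Finset.sup_eq_iSup]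
  exact Measurable.biSup _ s.countable_toSet fun j _ => measurable_const.indicator (hS j)

theorem maximalOp_lt_top (hf : ∫⁻ x, f x ∂ρ ≠ ∞) (x : α) : maximalOp ρ S s f x < ∞ :=
  (Finset.sup_lt_iff ENNReal.zero_lt_top).2 fun _ _ =>
    (Set.indicator_le_self' (fun _ _ => zero_le) x).trans_lt
      (setLAverage_lt_top (ne_top_of_le_ne_top hf (setLIntegral_le_lintegral _ _)))

theorem maximalOp_le_maximalOp_add {c : ℝ≥0∞} (hfg : ∀ x, f x ≤ g x + c) (x : α) :
    maximalOp ρ S s f x ≤ maximalOp ρ S s g x + c := by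
  refine Finset.sup_le fun j hj => ?_
  by_cases hx : x ∈ S j
  · rw [Set.indicator_of_mem hx]
    calc ⨍⁻ y in S j, f y ∂ρ ≤ ⨍⁻ y in S j, (g y + c) ∂ρ :=
          setLAverage_mono_ae _ (.of_forall hfg)
      _ = ⨍⁻ y in S j, g y ∂ρ + ρ (S j) * (c / ρ (S j)) := by
        rw [setLAverage_eq, setLAverage_eq, lintegral_add_right _ measurable_const,
          setLIntegral_const, ENNReal.add_div, mul_comm, mul_div_assoc]
      _ ≤ maximalOp ρ S s g x + c :=
        add_le_add (setLAverage_le_maximalOp hj hx) ENNReal.mul_div_le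
  · simp [Set.indicator_of_notMem hx]

variable [IsFiniteMeasure ρ] {D : ℝ≥0∞}

theorem mul_measure_lt_maximalOp_le (hS : ∀ j, MeasurableSet (S j))
    (hV : IsVitaliEnlargement S E) (hD : ∀ j, ρ (E j) ≤ D * ρ (S j)) (t : ℝ≥0∞) :
    t * ρ {x | t < maximalOp ρ S s f x} ≤ D * ∫⁻ x, f x ∂ρ := by
  classical
  obtain ⟨U, hUT, hUdisj, hUcov⟩ := hV (s.filter fun j => t < ⨍⁻ y in S j, f y ∂ρ)
  have hlevel : {x | t < maximalOp ρ S s f x} ⊆ ⋃ j ∈ U, E j := by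
    intro x hx
    obtain ⟨j, hj, hlt⟩ := Finset.lt_sup_iff.1 (show t < maximalOp ρ S s f x from hx)
    have hxj : x ∈ S j := by
      by_contra h
      simp [Set.indicator_of_notMem h] at hlt
    rw [Set.indicator_of_mem hxj] at hlt
    obtain ⟨k, hk, hsub⟩ := hUcov j (Finset.mem_filter.2 ⟨hj, hlt⟩)
    exact Set.mem_biUnion hk (hsub hxj)
  have hselected : ∀ j ∈ U, t * ρ (S j) ≤ ∫⁻ y in S j, f y ∂ρ := fun j hj => by
    rw [← measure_mul_setLAverage f (measure_ne_top ρ _), mul_comm]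
    gcongr
    exact (Finset.mem_filter.1 (hUT hj)).2.le
  calc t * ρ {x | t < maximalOp ρ S s f x} ≤ t * ∑ j ∈ U, D * ρ (S j) := by
        gcongr
        exact (measure_mono hlevel).trans
          ((measure_biUnion_finset_le _ _).trans (Finset.sum_le_sum fun j _ => hD j))
    _ = D * ∑ j ∈ U, t * ρ (S j) := by
        rw [Finset.mul_sum, Finset.mul_sum]
        exact Finset.sum_congr rfl fun j _ => mul_left_comm _ _ _
    _ ≤ D * ∑ j ∈ U, ∫⁻ y in S j, f y ∂ρ := by gcongr with j hj; exact hselected j hj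
    _ = D * ∫⁻ y in ⋃ j ∈ U, S j, f y ∂ρ := by
        rw [lintegral_biUnion_finset hUdisj (fun j _ => hS j)]
    _ ≤ D * ∫⁻ y, f y ∂ρ := by gcongr; exact Measure.restrict_le_self

theorem setLIntegral_le_mul_setLIntegral_maximalOp {Q : Set α} {j : ι} (hj : j ∈ s)
    (hQ : MeasurableSet Q) (hQS : Q ⊆ S j) (hD : ρ (S j) ≤ D * ρ Q) :
    ∫⁻ y in S j, f y ∂ρ ≤ D * ∫⁻ y in Q, maximalOp ρ S s f y ∂ρ :=
  calc ∫⁻ y in S j, f y ∂ρ = ρ (S j) * ⨍⁻ y in S j, f y ∂ρ :=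
        (measure_mul_setLAverage f (measure_ne_top ρ _)).symm
    _ ≤ D * (ρ Q * ⨍⁻ y in S j, f y ∂ρ) := by rw [← mul_assoc]; gcongr
    _ = D * ∫⁻ _ in Q, ⨍⁻ y in S j, f y ∂ρ ∂ρ := by rw [setLIntegral_const, mul_comm (ρ Q)]
    _ ≤ D * ∫⁻ y in Q, maximalOp ρ S s f y ∂ρ := by
        gcongr D * ?_
        exact setLIntegral_mono' hQ fun y hy => setLAverage_le_maximalOp hj (hQS hy)

theorem lintegral_maximalOp_sq_le (hS : ∀ j, MeasurableSet (S j)) (hV : IsVitaliEnlargement S E)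
    (hD : ∀ j, ρ (E j) ≤ D * ρ (S j)) (hf : Measurable f) (hf_top : ∀ x, f x ≠ ∞)
    (hf_int : ∫⁻ x, f x ∂ρ ≠ ∞) :
    ∫⁻ x, maximalOp ρ S s f x ^ 2 ∂ρ ≤ 8 * D * ∫⁻ x, f x ^ 2 ∂ρ := by
  set ν := ρ.withDensity f
  have hlevel : ∀ t ∈ Ioi (0 : ℝ), ρ {x | ENNReal.ofReal t < maximalOp ρ S s f x} *
      ENNReal.ofReal t ≤ 2 * D * ν {x | ENNReal.ofReal t < 2 * f x} := by
    intro t ht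
    set c := ENNReal.ofReal (t / 2)
    have htc : ENNReal.ofReal t = 2 * c := by
      rw [← ENNReal.ofReal_ofNat 2, ← ENNReal.ofReal_mul zero_le_two]
      ring_nf
    have hc : MeasurableSet {y | c < f y} := measurableSet_lt measurable_const hf
    have hsplit : ∀ y, f y ≤ {y | c < f y}.indicator f y + c := fun y => by
      by_cases hy : c < f y
      · simp [Set.indicator_of_mem (show y ∈ {y | c < f y} from hy)]
      · rw [Set.indicator_of_notMem (show y ∉ {y | c < f y} from hy), zero_add]
        exact not_lt.1 hy
    have hsub : {x | 2 * c < maximalOp ρ S s f x} ⊆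
        {x | c < maximalOp ρ S s ({y | c < f y}.indicator f) x} := fun x hx => by
      have h := (show 2 * c < _ from hx).trans_le (maximalOp_le_maximalOp_add hsplit x)
      rw [two_mul] at h
      exact lt_of_add_lt_add_right h
    have hdouble : {x | c < f x} = {x | 2 * c < 2 * f x} := by
      ext x
      exact (ENNReal.mul_lt_mul_iff_right two_ne_zero ENNReal.ofNat_ne_top).symm
    calc ρ {x | ENNReal.ofReal t < maximalOp ρ S s f x} * ENNReal.ofReal t
        = 2 * (c * ρ {x | 2 * c < maximalOp ρ S s f x}) := by rw [htc]; ring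
      _ ≤ 2 * (c * ρ {x | c < maximalOp ρ S s ({y | c < f y}.indicator f) x}) := by
        gcongr 2 * (c * ?_)
        exact measure_mono hsub
      _ ≤ 2 * (D * ∫⁻ y, {y | c < f y}.indicator f y ∂ρ) := by
        gcongr 2 * ?_
        exact mul_measure_lt_maximalOp_le hS hV hD c
      _ = 2 * D * ν {x | ENNReal.ofReal t < 2 * f x} := by
        rw [lintegral_indicator hc, ← withDensity_apply _ hc, hdouble, htc, mul_assoc]
  have hν_meas : Measurable fun t : ℝ => ν {x | ENNReal.ofReal t < 2 * f x} :=
    Antitone.measurable fun t₁ t₂ h =>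
      measure_mono fun x hx => (ENNReal.ofReal_le_ofReal h).trans_lt hx
  calc ∫⁻ x, maximalOp ρ S s f x ^ 2 ∂ρ
      = 2 * ∫⁻ t in Ioi 0, ρ {x | ENNReal.ofReal t < maximalOp ρ S s f x} * ENNReal.ofReal t :=
        lintegral_sq_eq_lintegral_meas_ofReal_lt_mul (measurable_maximalOp hS).aemeasurable
          fun x => (maximalOp_lt_top hf_int x).ne
    _ ≤ 2 * ∫⁻ t in Ioi 0, 2 * D * ν {x | ENNReal.ofReal t < 2 * f x} := by
        gcongr 2 * ?_
        exact setLIntegral_mono' measurableSet_Ioi hlevel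
    _ = 4 * D * ∫⁻ x, 2 * f x ∂ν := by
        rw [lintegral_const_mul _ hν_meas, ← lintegral_eq_lintegral_meas_ofReal_lt
          (hf.const_mul 2).aemeasurable fun x => ENNReal.mul_ne_top ENNReal.ofNat_ne_top (hf_top x)]
        ring
    _ = 8 * D * ∫⁻ x, f x ^ 2 ∂ρ := by
        rw [lintegral_withDensity_eq_lintegral_mul _ hf (hf.const_mul 2)]
        have h : ∀ x, (f * fun x => 2 * f x) x = 2 * f x ^ 2 := fun x => by
          simp only [Pi.mul_apply]; ring
        simp_rw [h]
        rw [lintegral_const_mul _ (hf.pow_const 2)]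
        ring

theorem lintegral_sq_sum_indicator_le {Q : ι → Set α} (hQ : ∀ i, MeasurableSet (Q i))
    (hS : ∀ i, MeasurableSet (S i)) (hQS : ∀ i, Q i ⊆ S i) (hSE : ∀ i, S i ⊆ E i)
    (hV : IsVitaliEnlargement S E) (hD : ∀ i, ρ (E i) ≤ D * ρ (Q i)) {A : ι → ℝ≥0∞}
    (hA : ∀ i, A i ≠ ∞) (s : Finset ι) :
    ∫⁻ x, (∑ i ∈ s, A i * (S i).indicator (fun _ => 1) x) ^ 2 ∂ρ ≤
      (2 * D) ^ 3 * ∫⁻ x, (∑ i ∈ s, A i * (Q i).indicator (fun _ => 1) x) ^ 2 ∂ρ := by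
  set G := fun x => ∑ i ∈ s, A i * (S i).indicator (fun _ => 1) x
  set F := fun x => ∑ i ∈ s, A i * (Q i).indicator (fun _ => 1) x
  set MG := maximalOp ρ S s G
  have hG : Measurable G :=
    Finset.measurable_sum _ fun i _ => (measurable_const.indicator (hS i)).const_mul _
  have hF : Measurable F :=
    Finset.measurable_sum _ fun i _ => (measurable_const.indicator (hQ i)).const_mul _
  have hMG : Measurable MG := measurable_maximalOp hS
  have hG_le : ∀ x, G x ≤ ∑ i ∈ s, A i := fun x => Finset.sum_le_sum fun i _ =>
    mul_le_of_le_one_right zero_le (Set.indicator_apply_le fun _ => le_rfl)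
  have hsum_top : ∑ i ∈ s, A i ≠ ∞ := ENNReal.sum_ne_top.2 fun i _ => hA i
  have hG_int : ∫⁻ x, G x ∂ρ ≠ ∞ := ne_top_of_le_ne_top
    (by simpa using ENNReal.mul_ne_top hsum_top (measure_ne_top ρ univ)) (lintegral_mono hG_le)
  have hX_top : ∫⁻ x, G x ^ 2 ∂ρ ≠ ∞ := ne_top_of_le_ne_top
    (by simpa using ENNReal.mul_ne_top (ENNReal.pow_ne_top hsum_top) (measure_ne_top ρ univ))
    (lintegral_mono fun x => pow_le_pow_left' (hG_le x) 2)
  have hMG_sq : ∫⁻ x, MG x ^ 2 ∂ρ ≤ 8 * D * ∫⁻ x, G x ^ 2 ∂ρ :=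
    lintegral_maximalOp_sq_le hS hV (fun i => (hD i).trans (by gcongr; exact hQS i)) hG
      (fun x => ne_top_of_le_ne_top hsum_top (hG_le x)) hG_int
  have henergy : ∫⁻ x, G x ^ 2 ∂ρ ≤ D * ∫⁻ x, F x * MG x ∂ρ :=
    calc ∫⁻ x, G x ^ 2 ∂ρ = ∑ i ∈ s, A i * ∫⁻ x in S i, G x ∂ρ := by
          rw [← lintegral_sum_indicator_mul hS hG]
          exact lintegral_congr fun x => sq _
      _ ≤ ∑ i ∈ s, A i * (D * ∫⁻ x in Q i, MG x ∂ρ) := by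
          gcongr with i hi
          exact setLIntegral_le_mul_setLIntegral_maximalOp hi (hQ i) (hQS i)
            ((measure_mono (hSE i)).trans (hD i))
      _ = D * ∫⁻ x, F x * MG x ∂ρ := by
          rw [lintegral_sum_indicator_mul hQ hMG, Finset.mul_sum]
          exact Finset.sum_congr rfl fun i _ => mul_left_comm _ _ _
  have hsq : (∫⁻ x, G x ^ 2 ∂ρ) ^ 2 ≤ (2 * D) ^ 3 * (∫⁻ x, F x ^ 2 ∂ρ) * ∫⁻ x, G x ^ 2 ∂ρ :=
    calc (∫⁻ x, G x ^ 2 ∂ρ) ^ 2 ≤ D ^ 2 * (∫⁻ x, F x * MG x ∂ρ) ^ 2 := by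
          rw [← mul_pow]; gcongr
      _ ≤ D ^ 2 * ((∫⁻ x, F x ^ 2 ∂ρ) * ∫⁻ x, MG x ^ 2 ∂ρ) := by
          gcongr
          exact sq_lintegral_mul_le hF.aemeasurable hMG.aemeasurable
      _ ≤ D ^ 2 * ((∫⁻ x, F x ^ 2 ∂ρ) * (8 * D * ∫⁻ x, G x ^ 2 ∂ρ)) := by gcongr
      _ = (2 * D) ^ 3 * (∫⁻ x, F x ^ 2 ∂ρ) * ∫⁻ x, G x ^ 2 ∂ρ := by ring
  rcases eq_or_ne (∫⁻ x, G x ^ 2 ∂ρ) 0 with h0 | h0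
  · exact h0.trans_le zero_le
  · rw [sq] at hsq
    exact (ENNReal.mul_le_mul_iff_left h0 hX_top).1 hsq

end MaximalOperator

section Cubes

variable {d : ℕ}

theorem measurableSet_cube (z : EuclideanSpace ℝ (Fin d)) (l : ℝ) :
    MeasurableSet (cube z l) := by
  simp only [cube, Set.ofPred_forall]
  exact MeasurableSet.iInter fun i => measurableSet_lt (by fun_prop) measurable_const

theorem cube_mono (z : EuclideanSpace ℝ (Fin d)) {s t : ℝ} (h : s ≤ t) : cube z s ⊆ cube z t :=
  fun _ hx i => (hx i).trans_le (by linarith)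

theorem center_mem_cube (z : EuclideanSpace ℝ (Fin d)) {l : ℝ} (hl : 0 < l) : z ∈ cube z l :=
  fun i => by simpa using half_pos hl

theorem cube_subset_cube_of_inter_nonempty {z z' : EuclideanSpace ℝ (Fin d)} {s t : ℝ}
    (hne : (cube z s ∩ cube z' t).Nonempty) (hst : s ≤ 2 * t) : cube z s ⊆ cube z' (5 * t) := by
  obtain ⟨w, hw, hw'⟩ := hne
  intro y hy i
  have := abs_sub_le (y i) (z i) (w i)
  have := abs_sub_le (y i) (w i) (z' i)
  have := abs_sub_comm (z i) (w i)
  linarith [hy i, hw i, hw' i]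

theorem cube_subset_cube_sqrt_mul (z : EuclideanSpace ℝ (Fin d)) {t : ℝ} (ht : 0 ≤ t) :
    cube z t ⊆ cube z (√d * t) := by
  intro x hx i
  have hd : (1 : ℝ) ≤ √d := Real.one_le_sqrt.2 (by exact_mod_cast i.pos)
  exact (hx i).trans_le (by nlinarith)

theorem isVitaliEnlargement_cube {ι : Type*} (z : ι → EuclideanSpace ℝ (Fin d)) {r : ι → ℝ}
    (hr : ∀ i, 0 < r i) :
    IsVitaliEnlargement (fun i => cube (z i) (r i)) (fun i => cube (z i) (5 * r i)) := by
  intro T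
  obtain ⟨R, hR⟩ := (T.image r).bddAbove
  obtain ⟨u, hu, hdisj, hcov⟩ := Vitali.exists_disjoint_subfamily_covering_enlargement
    (fun i => cube (z i) (r i)) T r 2 one_lt_two (fun i _ => (hr i).le) R
    (fun i hi => hR (Finset.mem_coe.2 (Finset.mem_image_of_mem r hi)))
    (fun i _ => ⟨z i, center_mem_cube _ (hr i)⟩)
  obtain ⟨U, rfl⟩ : ∃ U : Finset ι, ↑U = u := ⟨(T.finite_toSet.subset hu).toFinset, by simp⟩
  refine ⟨U, Finset.coe_subset.1 hu, hdisj, fun i hi => ?_⟩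
  obtain ⟨j, hj, hne, hrj⟩ := hcov i hi
  exact ⟨j, hj, cube_subset_cube_of_inter_nonempty hne hrj⟩

theorem lintegral_sq_sum_indicator_cube_le {ι : Type*} {ρ : Measure (EuclideanSpace ℝ (Fin d))}
    [IsFiniteMeasure ρ] (z : ι → EuclideanSpace ℝ (Fin d)) {l : ι → ℝ} (hl : ∀ i, 0 < l i)
    {B : ℝ} (hB : 1 ≤ B) {D : ℝ≥0∞}
    (hD : ∀ i, ρ (cube (z i) (5 * B * √d * l i)) ≤ D * ρ (cube (z i) (l i)))
    {A : ι → ℝ≥0∞} (hA : ∀ i, A i ≠ ∞) (s : Finset ι) :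
    ∫⁻ x, (∑ i ∈ s, A i * (cube (z i) (B * l i)).indicator (fun _ => 1) x) ^ 2 ∂ρ ≤
      (2 * D) ^ 3 * ∫⁻ x, (∑ i ∈ s, A i * (cube (z i) (l i)).indicator (fun _ => 1) x) ^ 2 ∂ρ := by
  have hBl : ∀ i, 0 < B * l i := fun i => mul_pos (by linarith) (hl i)
  have hE : ∀ i, cube (z i) (5 * (B * l i)) ⊆ cube (z i) (5 * B * √d * l i) := fun i => by
    rw [show 5 * B * √d * l i = √d * (5 * (B * l i)) by ring]
    exact cube_subset_cube_sqrt_mul _ (by linarith [hBl i])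
  exact lintegral_sq_sum_indicator_le (fun i => measurableSet_cube _ _)
    (fun i => measurableSet_cube _ _) (fun i => cube_mono _ (le_mul_of_one_le_left (hl i).le hB))
    (fun i => (cube_mono _ (by linarith [hBl i])).trans (hE i))
    ((isVitaliEnlargement_cube z hBl).mono hE) hD hA s

end Cubes

theorem maximal_lemma_general
    (d : ℕ) (ι : Type) [Countable ι]
    (ρ : Measure (EuclideanSpace ℝ (Fin d))) (hρprob : IsProbabilityMeasure ρ)
    (z : ι → EuclideanSpace ℝ (Fin d)) (l : ι → ℝ) (hl : ∀ i, 0 < l i)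
    (B : ℝ) (hB : 1 ≤ B)
    (D : ℝ) (hD : 0 < D)
    (hdoubling : ∀ i, (ρ (cube (z i) (5 * B * Real.sqrt d * l i))).toReal
        ≤ D * (ρ (cube (z i) (l i))).toReal)
    (a : ι → ℝ) :
    (∫⁻ x, (∑' i, ENNReal.ofReal (a i) *
        Set.indicator (cube (z i) (B * l i)) (fun _ => (1 : ℝ≥0∞)) x) ^ 2 ∂ρ)
          ^ ((1 : ℝ) / 2) ≤
      ENNReal.ofReal ((2 * D) ^ ((3 : ℝ) / 2)) *
        (∫⁻ x, (∑' i, ENNReal.ofReal (a i) *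
          Set.indicator (cube (z i) (l i)) (fun _ => (1 : ℝ≥0∞)) x) ^ 2 ∂ρ)
            ^ ((1 : ℝ) / 2) := by
  have := hρprob
  have hdb : ∀ i, ρ (cube (z i) (5 * B * √d * l i)) ≤ ENNReal.ofReal D * ρ (cube (z i) (l i)) :=
    fun i => le_ofReal_mul_of_toReal_le (measure_ne_top _ _) (measure_ne_top _ _) hD.le
      (hdoubling i)
  have hsq := lintegral_sq_tsum_le_of_forall_finset
    (fun i => (measurable_const.indicator (measurableSet_cube _ _)).const_mul _)
    (lintegral_sq_sum_indicator_cube_le z hl hB hdb (fun i => ENNReal.ofReal_ne_top (r := a i)))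
  have hconst : ((2 * ENNReal.ofReal D) ^ 3) ^ ((1 : ℝ) / 2) =
      ENNReal.ofReal ((2 * D) ^ ((3 : ℝ) / 2)) := by
    rw [← ENNReal.ofReal_ofNat 2, ← ENNReal.ofReal_mul zero_le_two,
      ← ENNReal.ofReal_pow (by positivity), ENNReal.ofReal_rpow_of_nonneg (by positivity)
      (by norm_num), ← Real.rpow_natCast, ← Real.rpow_mul (by positivity)]
    norm_num
  calc _ ≤ ((2 * ENNReal.ofReal D) ^ 3 * ∫⁻ x, (∑' i, ENNReal.ofReal (a i) *
          Set.indicator (cube (z i) (l i)) (fun _ => (1 : ℝ≥0∞)) x) ^ 2 ∂ρ) ^ ((1 : ℝ) / 2) :=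
        ENNReal.rpow_le_rpow hsq (by norm_num)
    _ = _ := by rw [ENNReal.mul_rpow_of_nonneg _ _ (by norm_num), hconst]

theorem maximal_lemma
    (d : ℕ) (hd : 1 ≤ d) (ι : Type) [Countable ι]
    (ρ : Measure (EuclideanSpace ℝ (Fin d))) (hρprob : IsProbabilityMeasure ρ)
    (z : ι → EuclideanSpace ℝ (Fin d)) (l : ι → ℝ) (hl : ∀ i, 0 < l i)
    (B : ℝ) (hB : 1 ≤ B)
    (D : ℝ) (hD : 0 < D)
    (hdoubling : ∀ i, (ρ (cube (z i) (5 * B * Real.sqrt d * l i))).toReal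
        ≤ D * (ρ (cube (z i) (l i))).toReal)
    (a : ι → ℝ) (ha : ∀ i, 0 ≤ a i) :
    (∫⁻ x, (∑' i, ENNReal.ofReal (a i) *
        Set.indicator (cube (z i) (B * l i)) (fun _ => (1 : ℝ≥0∞)) x) ^ 2 ∂ρ)
          ^ ((1 : ℝ) / 2) ≤
      ENNReal.ofReal ((2 * D) ^ ((3 : ℝ) / 2)) *
        (∫⁻ x, (∑' i, ENNReal.ofReal (a i) *
          Set.indicator (cube (z i) (l i)) (fun _ => (1 : ℝ≥0∞)) x) ^ 2 ∂ρ)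
            ^ ((1 : ℝ) / 2) :=
  maximal_lemma_general d ι ρ hρprob z l hl B hB D hD hdoubling a
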